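/- Let d : ℕ → A be admissible, let n ≥ 1, let w ∈ L_n(X_d), and let j be the largest k ≤ n such that the k-letter prefix (d)_k is a suffix of w (with j = 0 allowed, the empty prefix). Then for every word u: u ∈ F(w) if and only if there exists z ∈ X_d with z ⪯ σ^j d such that u is a prefix of z (i.e. z i = u i for all i < |u|). -/
import Mathlib


namespace BetaShift

variable {A : Type*}

/-- The shift map: `(shift x) n = x (n+1)`. -/
def shift (x : ℕ → A) : ℕ → A := fun n => x (n + 1)

/-- Lexicographic order on one-sided sequences: `x = y`, or there is an index `i`
such that `x j = y j` for all `j < i` and `x i < y i`. -/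
def SeqLe [LinearOrder A] (x y : ℕ → A) : Prop :=
  x = y ∨ ∃ i, (∀ j, j < i → x j = y j) ∧ x i < y i

/-- A word `w` occurs in the sequence `x`. -/
def Occurs (w : List A) (x : ℕ → A) : Prop :=
  ∃ i : ℕ, ∀ j : Fin w.length, x (i + j) = w.get j

/-- `Complexity x n` is the number `Φ_n(x)` of distinct words of length `n` occurring in `x`. -/
noncomputable def Complexity (x : ℕ → A) (n : ℕ) : ℕ :=
  Set.ncard {w : List A | w.length = n ∧ Occurs w x}

/-- A sequence is eventually periodic if there are `p ≥ 1` and `N` with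
`d (i + p) = d i` for all `i ≥ N`. -/
def EventuallyPeriodic (d : ℕ → A) : Prop :=
  ∃ p, 1 ≤ p ∧ ∃ N, ∀ i, N ≤ i → d (i + p) = d i

/-- `(d)_k`, the `k`-letter prefix of the sequence `d`, as a word. -/
def prefixWord (d : ℕ → A) (k : ℕ) : List A := List.ofFn (fun i : Fin k => d i)

variable {m : ℕ}

/-- `d` is admissible: every shift of `d` is lexicographically ≤ `d`,
and `d` is not eventually `0`. -/
def Admissible (d : ℕ → Fin m) : Prop :=
  (∀ i, SeqLe (shift^[i] d) d) ∧ ∀ N, ∃ i, N ≤ i ∧ (d i).val ≠ 0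

/-- The one-sided β-shift `X_d` determined by the admissible sequence `d`. -/
def XSet (d : ℕ → Fin m) : Set (ℕ → Fin m) :=
  {x | ∀ i, SeqLe (shift^[i] x) d}

/-- The language of `X_d`: all words occurring in some point of `X_d`. -/
def Lang (d : ℕ → Fin m) : Set (List (Fin m)) :=
  {w | ∃ x ∈ XSet d, Occurs w x}

/-- The follower set of the word `w` in `X_d`. -/
def Fol (d : ℕ → Fin m) (w : List (Fin m)) : Set (List (Fin m)) :=
  {u | w ++ u ∈ Lang d}

/-- The predecessor set of the word `w` in `X_d`. -/
def Pred (d : ℕ → Fin m) (w : List (Fin m)) : Set (List (Fin m)) :=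
  {s | s ++ w ∈ Lang d}

/-- The extender set of the word `w` in `X_d`. -/
def Ext (d : ℕ → Fin m) (w : List (Fin m)) : Set (List (Fin m) × List (Fin m)) :=
  {p | p.1 ++ w ++ p.2 ∈ Lang d}

/-- `|F(n)|`: the number of distinct follower sets of words of length `n` in `X_d`. -/
noncomputable def FolCount (d : ℕ → Fin m) (n : ℕ) : ℕ :=
  Set.ncard {S | ∃ w ∈ Lang d, w.length = n ∧ S = Fol d w}

/-- `|P(n)|`: the number of distinct predecessor sets of words of length `n` in `X_d`. -/
noncomputable def PredCount (d : ℕ → Fin m) (n : ℕ) : ℕ :=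
  Set.ncard {S | ∃ w ∈ Lang d, w.length = n ∧ S = Pred d w}

/-- `|E(n)|`: the number of distinct extender sets of words of length `n` in `X_d`. -/
noncomputable def ExtCount (d : ℕ → Fin m) (n : ℕ) : ℕ :=
  Set.ncard {S | ∃ w ∈ Lang d, w.length = n ∧ S = Ext d w}

/-- The largest `k ≤ n` such that the `k`-letter prefix of `d` is a suffix of `v`
(`k = 0`, the empty prefix, always works). -/
def classIndex (d : ℕ → Fin m) (n : ℕ) (v : List (Fin m)) : ℕ :=
  Nat.findGreatest (fun k => prefixWord d k <:+ v) n

/-- Lexicographic comparison of (equal-length) words: `u = v`, or at the first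
index where they differ, `u` takes the smaller value. -/
def WordLe [LinearOrder A] (u v : List A) : Prop :=
  u = v ∨ ∃ i, ∃ (hu : i < u.length) (hv : i < v.length),
    (∀ j (hju : j < u.length) (hjv : j < v.length), j < i → u.get ⟨j, hju⟩ = v.get ⟨j, hjv⟩) ∧
    u.get ⟨i, hu⟩ < v.get ⟨i, hv⟩

end BetaShift

open BetaShift

namespace BetaShiftAux

variable {A : Type*} {m : ℕ}

lemma shift_iter (x : ℕ → A) (i n : ℕ) : shift^[i] x n = x (n + i) := by
  induction i generalizing n with
  | zero => rfl
  | succ k ih =>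
    rw [Function.iterate_succ_apply']
    show shift^[k] x (n + 1) = _
    rw [ih]
    congr 1
    omega

lemma seqle_refl [LinearOrder A] (x : ℕ → A) : SeqLe x x := Or.inl rfl

lemma seqle_trans [LinearOrder A] {x y z : ℕ → A} (h1 : SeqLe x y) (h2 : SeqLe y z) :
    SeqLe x z := by
  rcases h1 with rfl | ⟨i, hi, hlt⟩
  · exact h2
  rcases h2 with rfl | ⟨i', hi', hlt'⟩
  · exact Or.inr ⟨i, hi, hlt⟩
  refine Or.inr ⟨min i i', fun j hj => ?_, ?_⟩
  · rw [hi j (lt_of_lt_of_le hj (min_le_left _ _)),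
      hi' j (lt_of_lt_of_le hj (min_le_right _ _))]
  · rcases lt_trichotomy i i' with h | h | h
    · simp only [min_eq_left h.le]
      exact lt_of_lt_of_le hlt (le_of_eq (hi' i h))
    · subst h; simp only [min_self]; exact lt_trans hlt hlt'
    · simp only [min_eq_right h.le]
      calc x i' = y i' := hi i' h
        _ < z i' := hlt'

lemma seqle_tail [LinearOrder A] {x y : ℕ → A} (k : ℕ) (h : SeqLe x y)
    (he : ∀ j, j < k → x j = y j) : SeqLe (shift^[k] x) (shift^[k] y) := by
  rcases h with rfl | ⟨i, hi, hlt⟩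
  · exact Or.inl rfl
  by_cases hik : i < k
  · exact absurd (he i hik) (ne_of_lt hlt)
  push_neg at hik
  refine Or.inr ⟨i - k, fun j hj => ?_, ?_⟩
  · rw [shift_iter, shift_iter]
    exact hi (j + k) (by omega)
  · rw [shift_iter, shift_iter]
    have : i - k + k = i := by omega
    rw [this]; exact hlt

lemma xset_shift {d : ℕ → Fin m} {x : ℕ → Fin m} (hx : x ∈ XSet d) (k : ℕ) :
    shift^[k] x ∈ XSet d := fun i => by
  rw [← Function.iterate_add_apply]
  exact hx (i + k)

lemma suffix_entries {d : ℕ → Fin m} {w : List (Fin m)} {k : ℕ}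
    (h : prefixWord d k <:+ w) :
    k ≤ w.length ∧ ∀ r, r < k → ∀ (h2 : w.length - k + r < w.length),
      w[w.length - k + r] = d r := by
  obtain ⟨v, hv⟩ := h
  subst hv
  have hlen : (v ++ prefixWord d k).length = v.length + k := by
    simp [prefixWord]
  constructor
  · omega
  · intro r hr h2
    have hidx : (v ++ prefixWord d k).length - k + r = v.length + r := by omega
    simp only [hidx]
    rw [List.getElem_append_right (by omega)]
    simp [prefixWord, List.getElem_ofFn]

lemma entries_suffix {d : ℕ → Fin m} {w : List (Fin m)} {k : ℕ} (hk : k ≤ w.length)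
    (h : ∀ r, r < k → ∀ (h2 : w.length - k + r < w.length), w[w.length - k + r] = d r) :
    prefixWord d k <:+ w := by
  have : prefixWord d k = w.drop (w.length - k) := by
    apply List.ext_getElem
    · simp [prefixWord, List.length_ofFn]; omega
    · intro i h1 h2
      simp only [prefixWord, List.length_ofFn] at h1
      rw [List.getElem_drop, h i h1 (by omega)]
      simp [prefixWord, List.getElem_ofFn]
  rw [this]
  exact List.drop_suffix _ _

lemma getElem_congr' {α : Type*} (w : List α) {i i' : ℕ} (hi : i < w.length)
    (hi' : i' < w.length) (h : i = i') : w[i] = w[i'] := by subst h; rfl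

end BetaShiftAux

open BetaShiftAux

/-- the follower set of `w` consists exactly of the prefixes of
points `z ∈ X_d` with `z ⪯ σ^j d`, where `j` is the largest `k ≤ n` such that
`(d)_k` is a suffix of `w`. -/
theorem stmt6 (m : ℕ) (hm : 1 ≤ m) (d : ℕ → Fin m) (hd : Admissible d)
    (n : ℕ) (hn : 1 ≤ n) (w : List (Fin m)) (hw : w ∈ Lang d) (hwl : w.length = n)
    (u : List (Fin m)) :
    u ∈ Fol d w ↔ ∃ z ∈ XSet d, SeqLe z (shift^[classIndex d n w] d) ∧
      ∀ i : Fin u.length, z i = u.get i := by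
  have hjn : classIndex d n w ≤ n := Nat.findGreatest_le n
  have hPj : prefixWord d (classIndex d n w) <:+ w := by
    have h0 : prefixWord d 0 <:+ w := by
      rw [show prefixWord d 0 = [] from rfl]
      exact List.nil_suffix
    unfold classIndex
    exact Nat.findGreatest_spec (P := fun k => prefixWord d k <:+ w) (Nat.zero_le n) h0
  set j := classIndex d n w with hjdef
  obtain ⟨hjw, hent⟩ := suffix_entries hPj
  have hmax : ∀ k, k ≤ n → prefixWord d k <:+ w → k ≤ j :=
    fun k hk h => Nat.le_findGreatest hk h
  constructor
  · -- forward
    intro hu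
    obtain ⟨x0, hx0, i0, hocc⟩ := hu
    refine ⟨shift^[i0 + n] x0, xset_shift hx0 _, ?_, ?_⟩
    · -- SeqLe (shift^[i0+n] x0) (shift^[j] d)
      have hy : SeqLe (shift^[i0 + (n - j)] x0) d := hx0 _
      have hyd : ∀ r, r < j → shift^[i0 + (n - j)] x0 r = d r := by
        intro r hr
        rw [shift_iter]
        have h1 : (n - j) + r < (w ++ u).length := by
          simp only [List.length_append]; omega
        have h2 := hocc ⟨(n - j) + r, h1⟩
        simp only [List.get_eq_getElem] at h2
        have h3 : x0 (r + (i0 + (n - j))) = (w ++ u)[(n - j) + r] := by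
          rw [← h2]; congr 1; omega
        rw [h3, List.getElem_append_left (by omega)]
        have := hent r hr (by omega)
        rw [← this]
        exact getElem_congr' w (by omega) (by omega) (by omega)
      have htail := seqle_tail j hy hyd
      have heq : shift^[j] (shift^[i0 + (n - j)] x0) = shift^[i0 + n] x0 := by
        funext r
        simp only [shift_iter]
        congr 1
        omega
      rwa [heq] at htail
    · -- prefix
      intro ⟨k, hk⟩
      rw [shift_iter]
      have h1 : n + k < (w ++ u).length := by
        simp only [List.length_append]; omega
      have h2 := hocc ⟨n + k, h1⟩
      simp only [List.get_eq_getElem] at h2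
      have h3 : x0 (k + (i0 + n)) = (w ++ u)[n + k] := by
        rw [← h2]; congr 1; omega
      rw [h3]
      simp only [List.get_eq_getElem]
      rw [List.getElem_append_right (by omega)]
      exact getElem_congr' u (by omega) (by omega) (by omega)
  · -- backward
    rintro ⟨z, hzX, hzle, hzu⟩
    obtain ⟨x0, hx0, i0, hocc⟩ := hw
    have hxX : shift^[i0] x0 ∈ XSet d := xset_shift hx0 i0
    set x := shift^[i0] x0 with hxdef
    have hxw : ∀ r, (h : r < w.length) → x r = w[r] := by
      intro r h
      rw [hxdef, shift_iter]
      have h2 := hocc ⟨r, h⟩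
      simp only [List.get_eq_getElem] at h2
      rw [← h2]; congr 1; omega
    set y : ℕ → Fin m := fun r => if r < n then x r else z (r - n) with hydef
    have hyx : ∀ r, r < n → y r = x r := by
      intro r hr; simp only [hydef, if_pos hr]
    have hyz : ∀ r, n ≤ r → y r = z (r - n) := by
      intro r hr; simp only [hydef, if_neg (by omega : ¬ r < n)]
    refine ⟨y, ?_, 0, ?_⟩
    · -- y ∈ XSet d
      intro t
      by_cases htn : n ≤ t
      · have heq : shift^[t] y = shift^[t - n] z := by
          funext r
          simp only [shift_iter]
          rw [hyz (r + t) (by omega)]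
          congr 1; omega
        rw [heq]; exact hzX (t - n)
      · push_neg at htn
        set k := n - t with hkdef
        -- scenario dichotomy using σ^t x ⪯ d
        have hBorA : (∀ r, r < k → x (t + r) = d r) ∨
            (∃ s, s < k ∧ (∀ r, r < s → x (t + r) = d r) ∧ x (t + s) < d s) := by
          rcases hxX t with heq | ⟨s, hs, hlt⟩
          · left
            intro r hr
            have := congrFun heq r
            rw [shift_iter] at this
            rw [← this]; congr 1; omega
          · by_cases hsk : s < k
            · right
              refine ⟨s, hsk, fun r hr => ?_, ?_⟩
              · have := hs r hr
                rw [shift_iter] at this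
                rw [← this]; congr 1; omega
              · rw [shift_iter] at hlt
                have : x (t + s) = x (s + t) := by congr 1; omega
                rw [this]; exact hlt
            · left
              intro r hr
              have := hs r (by omega)
              rw [shift_iter] at this
              rw [← this]; congr 1; omega
        rcases hBorA with hB | ⟨s, hsk, hsagree, hslt⟩
        · -- scenario B : the last k letters of w equal (d)_k
          have hkj : k ≤ j := by
            apply hmax k (by omega)
            apply entries_suffix (by omega)
            intro r hr h2
            have hidx : w.length - k + r = t + r := by omega
            rw [getElem_congr' w h2 (by omega) hidx, ← hxw (t + r) (by omega)]
            exact hB r hr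
          -- (d)_k is a suffix of (d)_j, so σ^{j-k} d agrees with d on first k letters
          have hdd : ∀ r, r < k → shift^[j - k] d r = d r := by
            intro r hr
            rw [shift_iter]
            have h0 : d (r + (j - k)) = d (j - k + r) := congrArg d (by omega)
            rw [h0]
            have e1 := hent (j - k + r) (by omega) (by omega)
            have e2 : w[w.length - k + r]'(by omega) = d r := by
              have hidx : w.length - k + r = t + r := by omega
              rw [getElem_congr' w (by omega) (by omega) hidx,
                ← hxw (t + r) (by omega)]
              exact hB r hr
            rw [← e1, ← e2]
            apply getElem_congr'
            omega
          have h1 : SeqLe (shift^[k] (shift^[j - k] d)) (shift^[k] d) :=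
            seqle_tail k (hd.1 (j - k)) hdd
          have h2 : shift^[k] (shift^[j - k] d) = shift^[j] d := by
            rw [← Function.iterate_add_apply]
            congr 1; omega
          rw [h2] at h1
          have hzk : SeqLe z (shift^[k] d) := seqle_trans hzle h1
          -- now conclude σ^t y ⪯ d
          rcases hzk with hE | ⟨s, hsz, hltz⟩
          · left
            funext r
            rw [shift_iter]
            by_cases hrk : r < k
            · rw [hyx (r + t) (by omega)]
              have : x (r + t) = x (t + r) := by congr 1; omega
              rw [this]; exact hB r hrk
            · rw [hyz (r + t) (by omega)]
              have h5 : z (r + t - n) = shift^[k] d (r - k) := by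
                rw [hE]; exact congrArg _ (by omega)
              rw [h5, shift_iter]
              exact congrArg d (by omega)
          · right
            refine ⟨k + s, fun r hr => ?_, ?_⟩
            · rw [shift_iter]
              by_cases hrk : r < k
              · rw [hyx (r + t) (by omega)]
                have : x (r + t) = x (t + r) := by congr 1; omega
                rw [this]; exact hB r hrk
              · rw [hyz (r + t) (by omega)]
                have h3 := hsz (r - k) (by omega)
                rw [shift_iter] at h3
                have : z (r + t - n) = z (r - k) := by congr 1; omega
                rw [this, h3]; congr 1; omega
            · rw [shift_iter, hyz (k + s + t) (by omega)]
              rw [shift_iter] at hltz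
              have : z (k + s + t - n) = z s := by congr 1; omega
              rw [this]
              have : d (k + s) = d (s + k) := by congr 1; omega
              rw [this]; exact hltz
        · -- scenario A : strict drop inside w
          right
          refine ⟨s, fun r hr => ?_, ?_⟩
          · rw [shift_iter, hyx (r + t) (by omega)]
            have : x (r + t) = x (t + r) := by congr 1; omega
            rw [this]; exact hsagree r hr
          · rw [shift_iter, hyx (s + t) (by omega)]
            have : x (s + t) = x (t + s) := by congr 1; omega
            rw [this]; exact hslt
    · -- occurrence of w ++ u at 0 in y
      intro jj
      simp only [Nat.zero_add, List.get_eq_getElem]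
      have hjj : (jj : ℕ) < (w ++ u).length := jj.2
      simp only [List.length_append] at hjj
      by_cases hlt : (jj : ℕ) < n
      · rw [hyx jj hlt, hxw jj (by omega)]
        exact (List.getElem_append_left (by omega)).symm
      · push_neg at hlt
        rw [hyz jj hlt]
        have h2 := hzu ⟨(jj : ℕ) - n, by omega⟩
        simp only [List.get_eq_getElem] at h2
        rw [h2]
        rw [List.getElem_append_right (by omega)]
        apply getElem_congr'
        omega
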